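/- arXiv:2304.03720 — 4 statements merged into one kernel-verified Lean document; each statement's English description precedes it below -/
import Mathlib

section
/- Suppose (A*, u*) minimizes f over all pairs (A, u) where A is a generalized Mahalanobis operator on H and u ∈ H. Write u* = u^T + u^⊥ with u^T ∈ V and ⟨A* u^⊥, v⟩ = 0 for every v ∈ V (the orthogonal decomposition with respect to ⟨·,·⟩_{A*}). Then (A*, u^T) also minimizes f over all such pairs. -/
open scoped RealInnerProductSpace

/-- A continuous linear operator on a real inner product space is a *generalized Mahalanobis
operator* if it is self-adjoint and positive definite. -/
def IsGenMahalanobis {H : Type*} [NormedAddCommGroup H] [InnerProductSpace ℝ H]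
    (A : H →L[ℝ] H) : Prop :=
  (∀ x y : H, ⟪A x, y⟫ = ⟪x, A y⟫) ∧ ∀ x : H, x ≠ 0 → 0 < ⟪A x, x⟫

/-- A linear operator on a (subspace viewed as an) inner product space is a *generalized
Mahalanobis operator* if it is self-adjoint and positive definite. -/
def IsGenMahalanobisLin {V : Type*} [NormedAddCommGroup V] [InnerProductSpace ℝ V]
    (B : V →ₗ[ℝ] V) : Prop :=
  (∀ x y : V, ⟪B x, y⟫ = ⟪x, B y⟫) ∧ ∀ x : V, x ≠ 0 → 0 < ⟪B x, x⟫

/-- The paired-comparison empirical objective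
`f(A, u) = Σ_i ℓ (sgn (‖z^i_1 - u‖_A² - ‖z^i_2 - u‖_A²)) (y i)`,
where `‖x‖_A² = ⟪A x, x⟫`. -/
noncomputable def pairObj {H : Type*} [NormedAddCommGroup H] [InnerProductSpace ℝ H]
    {n : ℕ} (ℓ : ℝ → ℝ → ℝ) (z₁ z₂ : Fin n → H) (y : Fin n → ℝ)
    (A : H → H) (u : H) : ℝ :=
  ∑ i, ℓ (Real.sign (⟪A (z₁ i - u), z₁ i - u⟫ - ⟪A (z₂ i - u), z₂ i - u⟫)) (y i)

/-- If `(A*, u*)` minimizes the paired-comparison objective `f` over all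
pairs of a generalized Mahalanobis operator on `H` and a point of `H`, and
`u* = u^T + u^⊥` is the `⟪·,·⟫_{A*}`-orthogonal decomposition with `u^T ∈ V`, then
`(A*, u^T)` also minimizes `f`. -/
theorem minimizer_projection_still_minimizes
    {H : Type*} [NormedAddCommGroup H] [InnerProductSpace ℝ H] [CompleteSpace H]
    (V : Submodule ℝ H) [FiniteDimensional ℝ V]
    {n : ℕ} (ℓ : ℝ → ℝ → ℝ) (z₁ z₂ : Fin n → H) (y : Fin n → ℝ)
    (hz₁ : ∀ i, z₁ i ∈ V) (hz₂ : ∀ i, z₂ i ∈ V)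
    (hy : ∀ i, y i = 1 ∨ y i = -1)
    (Astar : H →L[ℝ] H) (hAstar : IsGenMahalanobis Astar)
    (ustar uT uP : H) (hu : ustar = uT + uP) (huT : uT ∈ V)
    (huP : ∀ v ∈ V, ⟪Astar uP, v⟫ = 0)
    (hmin : ∀ (A : H →L[ℝ] H), IsGenMahalanobis A → ∀ u : H,
      pairObj ℓ z₁ z₂ y ⇑Astar ustar ≤ pairObj ℓ z₁ z₂ y ⇑A u) :
    ∀ (A : H →L[ℝ] H), IsGenMahalanobis A → ∀ u : H,
      pairObj ℓ z₁ z₂ y ⇑Astar uT ≤ pairObj ℓ z₁ z₂ y ⇑A u := by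
  intro A hA u
  have key : ∀ w : H, w ∈ V →
      ⟪Astar (w - ustar), w - ustar⟫ = ⟪Astar (w - uT), w - uT⟫ + ⟪Astar uP, uP⟫ := by
    intro w hw
    have h1 : w - ustar = (w - uT) - uP := by rw [hu]; abel
    have h0 : ⟪Astar uP, w - uT⟫ = 0 := huP _ (V.sub_mem hw huT)
    have h0' : ⟪Astar (w - uT), uP⟫ = 0 := by
      rw [hAstar.1, real_inner_comm]; exact h0
    have h2 : ⟪Astar uP, (w - uT) - uP⟫ = -⟪Astar uP, uP⟫ := by
      rw [inner_sub_right, h0]; ring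
    rw [h1, map_sub, inner_sub_left, inner_sub_right, h2, h0']
    ring
  have heq : pairObj ℓ z₁ z₂ y ⇑Astar uT = pairObj ℓ z₁ z₂ y ⇑Astar ustar := by
    unfold pairObj
    refine Finset.sum_congr rfl fun i _ => ?_
    rw [key _ (hz₁ i), key _ (hz₂ i)]
    ring_nf
  rw [heq]
  exact hmin A hA u
end

section
/- Suppose (A*, u*) minimizes f over all pairs (A, u) where A is a generalized Mahalanobis operator on H and u ∈ H, and write u* = u^T + u^⊥ with u^T ∈ V and ⟨A* u^⊥, v⟩ = 0 for every v ∈ V. Let B* be a generalized Mahalanobis operator on V with ⟨B* x, y⟩ = ⟨A* x, y⟩ for all x, y ∈ V. Then (B*, u^T) minimizes f_V over all pairs (B, u) where B is a generalized Mahalanobis operator on V and u ∈ V. -/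
/-!
Translating the centre by a vector `u^⊥` that is `A*`-orthogonal to `V` adds the same constant
`‖u^⊥‖²_{A*}` to every squared distance from a point of `V`, so it changes none of the signs in
`f`; hence `f_V(B*, u^T) = f(A*, u*)`. Conversely, every candidate `(B, u)` on `V` is realised by a
candidate on `H`: the operator acting as `B` on `V` and as the identity on `Vᗮ` is a generalized
Mahalanobis operator on `H` with the same quadratic form on `V` (the orthogonal projection exists
because `V` is finite-dimensional, hence complete). Minimality of `(A*, u*)` then gives
`f_V(B*, u^T) = f(A*, u*) ≤ f(Ā, u) = f_V(B, u)`, `Ā` being that extension of `B`.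
-/

open scoped RealInnerProductSpace

section Objective

variable {H : Type*} [NormedAddCommGroup H] [InnerProductSpace ℝ H]
  {n : ℕ} (ℓ : ℝ → ℝ → ℝ) (y : Fin n → ℝ)

theorem pairObj_subtype {V : Submodule ℝ H} (z₁ z₂ : Fin n → V) (B : V →ₗ[ℝ] V) (A : H → H)
    (hAB : ∀ w : V, ⟪A w, w⟫ = ⟪B w, w⟫) (u : V) :
    pairObj ℓ z₁ z₂ y B u = pairObj ℓ (fun i => (z₁ i : H)) (fun i => (z₂ i : H)) y A u := by
  simp only [pairObj, ← hAB, Submodule.coe_sub]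

theorem LinearMap.IsSymmetric.inner_map_sub_sub_of_inner_eq_zero {A : H →ₗ[ℝ] H}
    (hA : A.IsSymmetric) {p w : H} (hpw : ⟪A p, w⟫ = 0) :
    ⟪A (w - p), w - p⟫ = ⟪A w, w⟫ + ⟪A p, p⟫ := by
  have hwp : ⟪A w, p⟫ = 0 := by rw [hA, real_inner_comm, hpw]
  rw [map_sub, inner_sub_left, inner_sub_right, inner_sub_right, hpw, hwp]
  ring

theorem pairObj_add_of_inner_eq_zero {V : Submodule ℝ H} {z₁ z₂ : Fin n → H}
    (hz₁ : ∀ i, z₁ i ∈ V) (hz₂ : ∀ i, z₂ i ∈ V) {A : H →ₗ[ℝ] H} (hA : A.IsSymmetric)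
    {u p : H} (hu : u ∈ V) (hp : ∀ v ∈ V, ⟪A p, v⟫ = 0) :
    pairObj ℓ z₁ z₂ y A (u + p) = pairObj ℓ z₁ z₂ y A u := by
  have shift : ∀ z ∈ V, ⟪A (z - (u + p)), z - (u + p)⟫ = ⟪A (z - u), z - u⟫ + ⟪A p, p⟫ :=
    fun z hz => by
      rw [← sub_sub, hA.inner_map_sub_sub_of_inner_eq_zero (hp _ (V.sub_mem hz hu))]
  simp only [pairObj, shift _ (hz₁ _), shift _ (hz₂ _), add_sub_add_right_eq_sub]

end Objective

section Extension

variable {H : Type*} [NormedAddCommGroup H] [InnerProductSpace ℝ H]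
  (V : Submodule ℝ H) [FiniteDimensional ℝ V]

noncomputable def orthogonalExtension (B : V →ₗ[ℝ] V) : H →L[ℝ] H :=
  V.subtypeL ∘L LinearMap.toContinuousLinearMap B ∘L V.orthogonalProjectionOnto
    + (ContinuousLinearMap.id ℝ H - V.starProjection)

variable {V}

theorem inner_orthogonalExtension_apply (B : V →ₗ[ℝ] V) (x x' : H) :
    ⟪orthogonalExtension V B x, x'⟫ =
      ⟪B (V.orthogonalProjectionOnto x), V.orthogonalProjectionOnto x'⟫
        + ⟪x - V.starProjection x, x' - V.starProjection x'⟫ := by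
  have hx' : x' = V.starProjection x' + (x' - V.starProjection x') := by abel
  have hperp :
      ⟪x - V.starProjection x, x'⟫ = ⟪x - V.starProjection x, x' - V.starProjection x'⟫ := by
    conv_lhs => rw [hx']
    rw [inner_add_right, Submodule.inner_left_of_mem_orthogonal (V.starProjection_apply_mem x')
      (V.sub_starProjection_mem_orthogonal x), zero_add]
  simp [orthogonalExtension, inner_add_left, hperp]

theorem inner_orthogonalExtension_coe (B : V →ₗ[ℝ] V) (w : V) :
    ⟪orthogonalExtension V B w, w⟫ = ⟪B w, w⟫ := by
  simp [inner_orthogonalExtension_apply]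

theorem IsGenMahalanobisLin.isGenMahalanobis_orthogonalExtension {B : V →ₗ[ℝ] V}
    (hB : IsGenMahalanobisLin B) :
    IsGenMahalanobis (orthogonalExtension V B) := by
  refine ⟨fun x x' => ?_, fun x hx => ?_⟩
  · rw [real_inner_comm (orthogonalExtension V B x'), inner_orthogonalExtension_apply,
      inner_orthogonalExtension_apply, hB.1, real_inner_comm (V.orthogonalProjectionOnto x),
      real_inner_comm (x - _)]
  rw [inner_orthogonalExtension_apply]
  by_cases hPx : V.orthogonalProjectionOnto x = 0
  · have hx_perp : V.starProjection x = 0 := by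
      simp [← Submodule.coe_orthogonalProjectionOnto_apply, hPx]
    simpa [hPx, hx_perp] using real_inner_self_pos.mpr hx
  · exact add_pos_of_pos_of_nonneg (hB.2 _ hPx) real_inner_self_nonneg

end Extension

theorem minimizer_restricts_to_subspace_minimizer_general
    {H : Type*} [NormedAddCommGroup H] [InnerProductSpace ℝ H]
    (V : Submodule ℝ H) [FiniteDimensional ℝ V]
    {n : ℕ} (ℓ : ℝ → ℝ → ℝ) (z₁ z₂ : Fin n → H) (y : Fin n → ℝ)
    (hz₁ : ∀ i, z₁ i ∈ V) (hz₂ : ∀ i, z₂ i ∈ V)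
    (Astar : H →L[ℝ] H) (hAstar : IsGenMahalanobis Astar)
    (ustar uT uP : H) (hu : ustar = uT + uP) (huT : uT ∈ V)
    (huP : ∀ v ∈ V, ⟪Astar uP, v⟫ = 0)
    (hmin : ∀ (A : H →L[ℝ] H), IsGenMahalanobis A → ∀ u : H,
      pairObj ℓ z₁ z₂ y ⇑Astar ustar ≤ pairObj ℓ z₁ z₂ y ⇑A u)
    (Bstar : V →ₗ[ℝ] V)
    (hagree : ∀ x y' : V, ⟪Bstar x, y'⟫ = ⟪Astar (x : H), (y' : H)⟫) :
    ∀ (B : V →ₗ[ℝ] V), IsGenMahalanobisLin B → ∀ u : V,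
      pairObj ℓ (fun i => (⟨z₁ i, hz₁ i⟩ : V)) (fun i => (⟨z₂ i, hz₂ i⟩ : V)) y ⇑Bstar ⟨uT, huT⟩ ≤
        pairObj ℓ (fun i => (⟨z₁ i, hz₁ i⟩ : V)) (fun i => (⟨z₂ i, hz₂ i⟩ : V)) y ⇑B u := by
  intro B hB u
  calc pairObj ℓ (fun i => (⟨z₁ i, hz₁ i⟩ : V)) (fun i => (⟨z₂ i, hz₂ i⟩ : V)) y ⇑Bstar ⟨uT, huT⟩
      = pairObj ℓ z₁ z₂ y ⇑Astar uT :=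
        pairObj_subtype ℓ y _ _ Bstar Astar (fun w => (hagree w w).symm) _
    _ = pairObj ℓ z₁ z₂ y ⇑Astar ustar := by
        rw [hu]
        exact (pairObj_add_of_inner_eq_zero ℓ y hz₁ hz₂ (A := Astar.toLinearMap) hAstar.1 huT
          huP).symm
    _ ≤ pairObj ℓ z₁ z₂ y ⇑(orthogonalExtension V B) u :=
        hmin _ hB.isGenMahalanobis_orthogonalExtension u
    _ = _ := (pairObj_subtype ℓ y (fun i => ⟨z₁ i, hz₁ i⟩) (fun i => ⟨z₂ i, hz₂ i⟩) B _
        (inner_orthogonalExtension_coe B) u).symm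

/-- If `(A*, u*)` minimizes the paired-comparison objective `f` over `H`,
`u* = u^T + u^⊥` is the `⟪·,·⟫_{A*}`-orthogonal decomposition with `u^T ∈ V`, and `B*` is a
generalized Mahalanobis operator on `V` agreeing with `A*` on `V`, then `(B*, u^T)` minimizes
the finite-dimensional objective `f_V`. -/
theorem minimizer_restricts_to_subspace_minimizer
    {H : Type*} [NormedAddCommGroup H] [InnerProductSpace ℝ H] [CompleteSpace H]
    (V : Submodule ℝ H) [FiniteDimensional ℝ V]
    {n : ℕ} (ℓ : ℝ → ℝ → ℝ) (z₁ z₂ : Fin n → H) (y : Fin n → ℝ)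
    (hz₁ : ∀ i, z₁ i ∈ V) (hz₂ : ∀ i, z₂ i ∈ V)
    (hy : ∀ i, y i = 1 ∨ y i = -1)
    (Astar : H →L[ℝ] H) (hAstar : IsGenMahalanobis Astar)
    (ustar uT uP : H) (hu : ustar = uT + uP) (huT : uT ∈ V)
    (huP : ∀ v ∈ V, ⟪Astar uP, v⟫ = 0)
    (hmin : ∀ (A : H →L[ℝ] H), IsGenMahalanobis A → ∀ u : H,
      pairObj ℓ z₁ z₂ y ⇑Astar ustar ≤ pairObj ℓ z₁ z₂ y ⇑A u)
    (Bstar : V →ₗ[ℝ] V) (hBstar : IsGenMahalanobisLin Bstar)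
    (hagree : ∀ x y' : V, ⟪Bstar x, y'⟫ = ⟪Astar (x : H), (y' : H)⟫) :
    ∀ (B : V →ₗ[ℝ] V), IsGenMahalanobisLin B → ∀ u : V,
      pairObj ℓ (fun i => (⟨z₁ i, hz₁ i⟩ : V)) (fun i => (⟨z₂ i, hz₂ i⟩ : V)) y ⇑Bstar ⟨uT, huT⟩ ≤
        pairObj ℓ (fun i => (⟨z₁ i, hz₁ i⟩ : V)) (fun i => (⟨z₂ i, hz₂ i⟩ : V)) y ⇑B u :=
  minimizer_restricts_to_subspace_minimizer_general V ℓ z₁ z₂ y hz₁ hz₂ Astar hAstar ustar uT uP hu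
    huT huP hmin Bstar hagree
end

section
/- Suppose (B*, u) minimizes f_V over all pairs (B, v) where B is a generalized Mahalanobis operator on V and v ∈ V, and let A* be a generalized Mahalanobis operator on H satisfying ⟨A* x, y⟩ = ⟨B* x, y⟩ for all x, y ∈ V. Then (A*, u) minimizes f over all pairs (A, w) where A is a generalized Mahalanobis operator on H and w ∈ H. -/
open scoped RealInnerProductSpace

/-!
The objective only sees the quadratic form of `A` on the data points and the base point. If the
data lie in `V`, replacing `A` by its compression `P_V A|_V` does not change the form on `V`, and
replacing the base point `w` by its `A`-orthogonal projection `v ∈ V` does not change the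
differences `‖z₁ - w‖_A² - ‖z₂ - w‖_A²`, which are affine in `w` with linear part
`-2 ⟪A (z₁ - z₂), w⟫`. Hence every value `f(A, w)` is a value `f_V(B, v)`, which is at least
`f_V(B*, u) = f(A*, u)`.
-/

section

variable {H : Type*} [NormedAddCommGroup H] [InnerProductSpace ℝ H]

section PairObj

variable {n : ℕ} (ℓ : ℝ → ℝ → ℝ) (y : Fin n → ℝ)

theorem LinearMap.IsSymmetric.inner_map_sub_sub_inner_map_sub {A : H →ₗ[ℝ] H}
    (hA : A.IsSymmetric) (z₁ z₂ u : H) :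
    ⟪A (z₁ - u), z₁ - u⟫ - ⟪A (z₂ - u), z₂ - u⟫ =
      ⟪A z₁, z₁⟫ - ⟪A z₂, z₂⟫ - 2 * ⟪A (z₁ - z₂), u⟫ := by
  have hswap : ∀ x v : H, ⟪A v, x⟫ = ⟪A x, v⟫ := fun x v => by
    rw [hA, real_inner_comm]
  simp only [map_sub, inner_sub_left, inner_sub_right, hswap z₁ u, hswap z₂ u]
  ring

theorem LinearMap.IsSymmetric.pairObj_eq_of_inner_eq {A : H →ₗ[ℝ] H} (hA : A.IsSymmetric)
    {z₁ z₂ : Fin n → H} {v w : H} (h : ∀ i, ⟪A (z₁ i - z₂ i), v⟫ = ⟪A (z₁ i - z₂ i), w⟫) :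
    pairObj ℓ z₁ z₂ y A v = pairObj ℓ z₁ z₂ y A w := by
  unfold pairObj
  simp only [hA.inner_map_sub_sub_inner_map_sub, h]

theorem pairObj_eq_pairObj_coe (V : Submodule ℝ H) {B : V → V} {A : H → H}
    (hBA : ∀ x : V, ⟪B x, x⟫ = ⟪A x, x⟫) (z₁ z₂ : Fin n → V) (u : V) :
    pairObj ℓ z₁ z₂ y B u = pairObj ℓ (fun i => (z₁ i : H)) (fun i => (z₂ i : H)) y A u := by
  unfold pairObj
  simp only [hBA, Submodule.coe_sub]

end PairObj

section Compression

variable (V : Submodule ℝ H)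

noncomputable def compression [V.HasOrthogonalProjection] (A : H →L[ℝ] H) : V →ₗ[ℝ] V :=
  V.orthogonalProjectionOnto.toLinearMap ∘ₗ A.toLinearMap ∘ₗ V.subtype

theorem inner_compression_apply [V.HasOrthogonalProjection] (A : H →L[ℝ] H) (x y : V) :
    ⟪compression V A x, y⟫ = ⟪A x, y⟫ :=
  Submodule.inner_orthogonalProjectionOnto_eq_of_mem_right y (A x)

theorem IsGenMahalanobis.isGenMahalanobisLin_compression [V.HasOrthogonalProjection]
    {A : H →L[ℝ] H} (hA : IsGenMahalanobis A) : IsGenMahalanobisLin (compression V A) := by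
  refine ⟨fun x y => ?_, fun x hx => ?_⟩
  · calc ⟪compression V A x, y⟫ = ⟪A x, y⟫ := inner_compression_apply V A x y
      _ = ⟪A y, x⟫ := by rw [hA.1, real_inner_comm]
      _ = ⟪x, compression V A y⟫ := by rw [← inner_compression_apply, real_inner_comm]
  · rw [inner_compression_apply]
    exact hA.2 x (by simpa using hx)

end Compression

theorem IsGenMahalanobisLin.bijective {V : Type*} [NormedAddCommGroup V] [InnerProductSpace ℝ V]
    [FiniteDimensional ℝ V] {B : V →ₗ[ℝ] V} (hB : IsGenMahalanobisLin B) :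
    Function.Bijective B := by
  have hinj : Function.Injective B := by
    refine (injective_iff_map_eq_zero B).2 fun x hx => ?_
    by_contra hx0
    simpa [hx] using hB.2 x hx0
  exact ⟨hinj, LinearMap.injective_iff_surjective.1 hinj⟩

theorem IsGenMahalanobis.exists_inner_apply_eq (V : Submodule ℝ H) [FiniteDimensional ℝ V]
    {A : H →L[ℝ] H} (hA : IsGenMahalanobis A) (w : H) :
    ∃ v : V, ∀ d : V, ⟪A d, v⟫ = ⟪A d, w⟫ := by
  obtain ⟨v, hv⟩ :=
    (hA.isGenMahalanobisLin_compression V).bijective.2 (V.orthogonalProjectionOnto (A w))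
  refine ⟨v, fun d => ?_⟩
  calc ⟪A d, v⟫ = ⟪compression V A v, d⟫ := by
        rw [inner_compression_apply, hA.1, real_inner_comm]
    _ = ⟪A d, w⟫ := by
        rw [hv, Submodule.inner_orthogonalProjectionOnto_eq_of_mem_right, hA.1, real_inner_comm]

end

theorem subspace_minimizer_extends_to_minimizer_general
    {H : Type*} [NormedAddCommGroup H] [InnerProductSpace ℝ H]
    (V : Submodule ℝ H) [FiniteDimensional ℝ V]
    {n : ℕ} (ℓ : ℝ → ℝ → ℝ) (z₁ z₂ : Fin n → H) (y : Fin n → ℝ)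
    (hz₁ : ∀ i, z₁ i ∈ V) (hz₂ : ∀ i, z₂ i ∈ V)
    (Bstar : V →ₗ[ℝ] V) (u : V)
    (hmin : ∀ (B : V →ₗ[ℝ] V), IsGenMahalanobisLin B → ∀ v : V,
      pairObj ℓ (fun i => (⟨z₁ i, hz₁ i⟩ : V)) (fun i => (⟨z₂ i, hz₂ i⟩ : V)) y ⇑Bstar u ≤
        pairObj ℓ (fun i => (⟨z₁ i, hz₁ i⟩ : V)) (fun i => (⟨z₂ i, hz₂ i⟩ : V)) y ⇑B v)
    (Astar : H →L[ℝ] H)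
    (hagree : ∀ x y' : V, ⟪Astar (x : H), (y' : H)⟫ = ⟪Bstar x, y'⟫) :
    ∀ (A : H →L[ℝ] H), IsGenMahalanobis A → ∀ w : H,
      pairObj ℓ z₁ z₂ y ⇑Astar (u : H) ≤ pairObj ℓ z₁ z₂ y ⇑A w := by
  intro A hA w
  obtain ⟨v, hv⟩ := hA.exists_inner_apply_eq V w
  calc pairObj ℓ z₁ z₂ y Astar u
      = pairObj ℓ (fun i => (⟨z₁ i, hz₁ i⟩ : V)) (fun i => (⟨z₂ i, hz₂ i⟩ : V)) y Bstar u :=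
        (pairObj_eq_pairObj_coe ℓ y V (fun x => (hagree x x).symm)
          (fun i => ⟨z₁ i, hz₁ i⟩) (fun i => ⟨z₂ i, hz₂ i⟩) u).symm
    _ ≤ pairObj ℓ (fun i => (⟨z₁ i, hz₁ i⟩ : V)) (fun i => (⟨z₂ i, hz₂ i⟩ : V)) y
          (compression V A) v :=
        hmin _ (hA.isGenMahalanobisLin_compression V) v
    _ = pairObj ℓ z₁ z₂ y A v :=
        pairObj_eq_pairObj_coe ℓ y V (fun x => inner_compression_apply V A x x)
          (fun i => ⟨z₁ i, hz₁ i⟩) (fun i => ⟨z₂ i, hz₂ i⟩) v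
    _ = pairObj ℓ z₁ z₂ y A w :=
        LinearMap.IsSymmetric.pairObj_eq_of_inner_eq (A := A.toLinearMap) ℓ y hA.1
          fun i => hv ⟨z₁ i - z₂ i, V.sub_mem (hz₁ i) (hz₂ i)⟩

/-- If `(B*, u)` minimizes the finite-dimensional paired-comparison objective
`f_V` over generalized Mahalanobis operators on `V` and points of `V`, and `A*` is a
generalized Mahalanobis operator on `H` agreeing with `B*` on `V`, then `(A*, u)` minimizes
the infinite-dimensional objective `f`. -/
theorem subspace_minimizer_extends_to_minimizer
    {H : Type*} [NormedAddCommGroup H] [InnerProductSpace ℝ H] [CompleteSpace H]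
    (V : Submodule ℝ H) [FiniteDimensional ℝ V]
    {n : ℕ} (ℓ : ℝ → ℝ → ℝ) (z₁ z₂ : Fin n → H) (y : Fin n → ℝ)
    (hz₁ : ∀ i, z₁ i ∈ V) (hz₂ : ∀ i, z₂ i ∈ V)
    (hy : ∀ i, y i = 1 ∨ y i = -1)
    (Bstar : V →ₗ[ℝ] V) (hBstar : IsGenMahalanobisLin Bstar) (u : V)
    (hmin : ∀ (B : V →ₗ[ℝ] V), IsGenMahalanobisLin B → ∀ v : V,
      pairObj ℓ (fun i => (⟨z₁ i, hz₁ i⟩ : V)) (fun i => (⟨z₂ i, hz₂ i⟩ : V)) y ⇑Bstar u ≤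
        pairObj ℓ (fun i => (⟨z₁ i, hz₁ i⟩ : V)) (fun i => (⟨z₂ i, hz₂ i⟩ : V)) y ⇑B v)
    (Astar : H →L[ℝ] H) (hAstar : IsGenMahalanobis Astar)
    (hagree : ∀ x y' : V, ⟪Astar (x : H), (y' : H)⟫ = ⟪Bstar x, y'⟫) :
    ∀ (A : H →L[ℝ] H), IsGenMahalanobis A → ∀ w : H,
      pairObj ℓ z₁ z₂ y ⇑Astar (u : H) ≤ pairObj ℓ z₁ z₂ y ⇑A w :=
  subspace_minimizer_extends_to_minimizer_general V ℓ z₁ z₂ y hz₁ hz₂ Bstar u hmin Astar hagree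
end

section
/- Let λ > 0. The infimum of f(A, u) + λ‖u‖_A² over all pairs (A, u), where A is a generalized Mahalanobis operator on H and u ∈ H, equals the infimum of f_V(B, u) + λ‖u‖_B² over all pairs (B, u), where B is a generalized Mahalanobis operator on V and u ∈ V. -/
open scoped RealInnerProductSpace

/-!
A Mahalanobis operator `B` on `V` extends to `H` (by the identity on `Vᗮ`) without changing its
quadratic form on `V`, so every value of the problem on `V` is a value of the problem on `H`.
Conversely, given `(A, u)`, compress `A` to `B = P_V A|_V` and replace `u` by its `A`-orthogonal
projection `v` onto `V`. Pythagoras for `⟪A ·, ·⟫` gives `‖w - u‖_A² = ‖w - v‖_B² + ‖u - v‖_A²`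
for `w ∈ V`: all comparison signs are unchanged, and `w = 0` shows that the regularizer only
decreases. So each set of values lies above the other, and the infima agree (also in the
degenerate cases, where both are the junk value `sInf ∅ = 0` or both sets are unbounded below).
-/

theorem LinearMap.IsSymmetric.inner_map_sub_self_of_inner_eq_zero {E : Type*}
    [NormedAddCommGroup E] [InnerProductSpace ℝ E] {T : E →ₗ[ℝ] E}
    (hT : T.IsSymmetric) {a b : E} (hab : ⟪T a, b⟫ = 0) :
    ⟪T (a - b), a - b⟫ = ⟪T a, a⟫ + ⟪T b, b⟫ := by
  have hba : ⟪T b, a⟫ = 0 := by rw [hT, real_inner_comm, hab]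
  simp only [map_sub, inner_sub_left, inner_sub_right, hab, hba]
  ring

theorem pairObj_coe_eq_of_forall_inner_eq_add {H : Type*} [NormedAddCommGroup H]
    [InnerProductSpace ℝ H] {V : Submodule ℝ H} {n : ℕ} (ℓ : ℝ → ℝ → ℝ) (z₁ z₂ : Fin n → V)
    (y : Fin n → ℝ) {A : H → H} {u : H} {B : V → V} {v : V} {c : ℝ}
    (h : ∀ w : V, ⟪A (w - u), w - u⟫ = ⟪B (w - v), w - v⟫ + c) :
    pairObj ℓ (fun i => (z₁ i : H)) (fun i => (z₂ i : H)) y A u = pairObj ℓ z₁ z₂ y B v := by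
  simp only [pairObj, h, add_sub_add_right_eq_sub]

namespace Submodule

variable {H : Type*} [NormedAddCommGroup H] [InnerProductSpace ℝ H] (V : Submodule ℝ H)

noncomputable def compression [V.HasOrthogonalProjection] (A : H →ₗ[ℝ] H) : V →ₗ[ℝ] V :=
  (V.orthogonalProjectionOnto : H →ₗ[ℝ] V) ∘ₗ A ∘ₗ V.subtype

theorem inner_compression_apply [V.HasOrthogonalProjection] (A : H →ₗ[ℝ] H) (x w : V) :
    ⟪V.compression A x, w⟫ = ⟪A x, w⟫ :=
  inner_orthogonalProjectionOnto_eq_of_mem_right w (A x)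

noncomputable def orthogonalExtension [FiniteDimensional ℝ V] (B : V →ₗ[ℝ] V) : H →L[ℝ] H :=
  V.subtypeL ∘L LinearMap.toContinuousLinearMap B ∘L V.orthogonalProjectionOnto +
    Vᗮ.subtypeL ∘L Vᗮ.orthogonalProjectionOnto

theorem inner_orthogonalExtension_apply [FiniteDimensional ℝ V] (B : V →ₗ[ℝ] V) (x w : H) :
    ⟪V.orthogonalExtension B x, w⟫ =
      ⟪B (V.orthogonalProjectionOnto x), V.orthogonalProjectionOnto w⟫ +
        ⟪Vᗮ.orthogonalProjectionOnto x, Vᗮ.orthogonalProjectionOnto w⟫ := by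
  simp [orthogonalExtension, inner_add_left]

theorem orthogonalExtension_apply_coe [FiniteDimensional ℝ V] (B : V →ₗ[ℝ] V) (w : V) :
    V.orthogonalExtension B w = B w := by
  simp [orthogonalExtension, orthogonalProjectionOnto_mem_subspace_eq_self]

end Submodule

namespace IsGenMahalanobisLin

section

variable {E : Type*} [NormedAddCommGroup E] [InnerProductSpace ℝ E] {B : E →ₗ[ℝ] E}

theorem inner_self_nonneg (hB : IsGenMahalanobisLin B) (x : E) : 0 ≤ ⟪B x, x⟫ := by
  rcases eq_or_ne x 0 with rfl | hx
  · simp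
  · exact (hB.2 x hx).le

theorem injective (hB : IsGenMahalanobisLin B) : Function.Injective B := by
  refine (injective_iff_map_eq_zero B).mpr fun x hx => ?_
  by_contra hne
  simpa [hx] using hB.2 x hne

end

variable {H : Type*} [NormedAddCommGroup H] [InnerProductSpace ℝ H] {V : Submodule ℝ H}

theorem compression [V.HasOrthogonalProjection] {A : H →ₗ[ℝ] H}
    (hA : IsGenMahalanobisLin A) : IsGenMahalanobisLin (V.compression A) := by
  refine ⟨fun x w => ?_, fun x hx => ?_⟩
  · rw [V.inner_compression_apply, ← real_inner_comm x, V.inner_compression_apply, hA.1,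
      real_inner_comm]
  · rw [V.inner_compression_apply]
    exact hA.2 x (by simpa using hx)

theorem orthogonalExtension [FiniteDimensional ℝ V] {B : V →ₗ[ℝ] V}
    (hB : IsGenMahalanobisLin B) : IsGenMahalanobis (V.orthogonalExtension B) := by
  refine ⟨fun x w => ?_, fun x hx => ?_⟩
  · rw [← real_inner_comm x, V.inner_orthogonalExtension_apply, V.inner_orthogonalExtension_apply,
      hB.1, real_inner_comm (B _), real_inner_comm (Vᗮ.orthogonalProjectionOnto w)]
  · rw [V.inner_orthogonalExtension_apply]
    have hsplit : (V.orthogonalProjectionOnto x : H) + Vᗮ.orthogonalProjectionOnto x = x :=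
      V.starProjection_add_starProjection_orthogonal x
    rcases eq_or_ne (V.orthogonalProjectionOnto x) 0 with hV | hV
    · have hVperp : Vᗮ.orthogonalProjectionOnto x ≠ 0 := by
        rintro h
        simp [hV, h, hx.symm] at hsplit
      exact add_pos_of_nonneg_of_pos (hB.inner_self_nonneg _) (real_inner_self_pos.mpr hVperp)
    · exact add_pos_of_pos_of_nonneg (hB.2 _ hV) real_inner_self_nonneg

theorem exists_inner_map_sub_eq_zero [FiniteDimensional ℝ V] {A : H →ₗ[ℝ] H}
    (hA : IsGenMahalanobisLin A) (u : H) : ∃ v : V, ∀ w : V, ⟪A w, u - v⟫ = 0 := by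
  obtain ⟨v, hv⟩ := LinearMap.injective_iff_surjective.mp (hA.compression (V := V)).injective
    (V.orthogonalProjectionOnto (A u))
  refine ⟨v, fun w => ?_⟩
  have hcomm : ∀ x : H, ⟪A w, x⟫ = ⟪A x, w⟫ := fun x => by rw [hA.1, real_inner_comm]
  have huv : ⟪A u, w⟫ = ⟪A v, w⟫ := by
    rw [← V.inner_compression_apply, hv, Submodule.inner_orthogonalProjectionOnto_eq_of_mem_right]
  rw [inner_sub_right, hcomm, hcomm, huv, sub_self]

theorem exists_inner_map_sub_eq_compression_add [FiniteDimensional ℝ V] {A : H →ₗ[ℝ] H}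
    (hA : IsGenMahalanobisLin A) (u : H) :
    ∃ v : V, ∀ w : V,
      ⟪A (w - u), w - u⟫ = ⟪V.compression A (w - v), w - v⟫ + ⟪A (u - v), u - v⟫ := by
  obtain ⟨v, hv⟩ := hA.exists_inner_map_sub_eq_zero (V := V) u
  refine ⟨v, fun w => ?_⟩
  have hsplit : (w : H) - u = ((w - v : V) : H) - (u - v) := by simp
  rw [hsplit, LinearMap.IsSymmetric.inner_map_sub_self_of_inner_eq_zero hA.1 (hv _),
    V.inner_compression_apply]

end IsGenMahalanobisLin

theorem regularized_infimum_eq_subspace_infimum_general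
    {H : Type*} [NormedAddCommGroup H] [InnerProductSpace ℝ H]
    (V : Submodule ℝ H) [FiniteDimensional ℝ V]
    {n : ℕ} (ℓ : ℝ → ℝ → ℝ) (z₁ z₂ : Fin n → H) (y : Fin n → ℝ)
    (hz₁ : ∀ i, z₁ i ∈ V) (hz₂ : ∀ i, z₂ i ∈ V)
    (lam : ℝ) (hlam : 0 < lam) :
    sInf {r : ℝ | ∃ (A : H →L[ℝ] H) (u : H), IsGenMahalanobis A ∧
        r = pairObj ℓ z₁ z₂ y ⇑A u + lam * ⟪A u, u⟫} =
      sInf {r : ℝ | ∃ (B : V →ₗ[ℝ] V) (u : V), IsGenMahalanobisLin B ∧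
        r = pairObj ℓ (fun i => (⟨z₁ i, hz₁ i⟩ : V)) (fun i => (⟨z₂ i, hz₂ i⟩ : V)) y ⇑B u +
          lam * ⟪B u, u⟫} := by
  refine csInf_eq_csInf_of_forall_exists_le ?_ ?_
  · rintro _ ⟨A, u, hA, rfl⟩
    replace hA : IsGenMahalanobisLin (A : H →ₗ[ℝ] H) := hA
    obtain ⟨v, hv⟩ := hA.exists_inner_map_sub_eq_compression_add (V := V) u
    have hobj : pairObj ℓ z₁ z₂ y A u = pairObj ℓ (fun i => (⟨z₁ i, hz₁ i⟩ : V))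
        (fun i => (⟨z₂ i, hz₂ i⟩ : V)) y (V.compression A) v :=
      pairObj_coe_eq_of_forall_inner_eq_add ℓ (fun i => ⟨z₁ i, hz₁ i⟩)
        (fun i => ⟨z₂ i, hz₂ i⟩) y hv
    have hreg : ⟪A u, u⟫ = ⟪V.compression A v, v⟫ + ⟪A (u - v), u - v⟫ := by simpa using hv 0
    have hgap : 0 ≤ lam * ⟪A (u - v), u - v⟫ := mul_nonneg hlam.le (hA.inner_self_nonneg _)
    refine ⟨_, ⟨_, v, hA.compression, rfl⟩, ?_⟩
    rw [hobj, hreg, mul_add]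
    linarith
  · rintro _ ⟨B, v, hB, rfl⟩
    have hext : ∀ w : V, ⟪V.orthogonalExtension B w, w⟫ = ⟪B w, w⟫ := fun w => by
      rw [V.orthogonalExtension_apply_coe, ← Submodule.coe_inner]
    refine ⟨_, ⟨_, v, hB.orthogonalExtension, rfl⟩, le_of_eq ?_⟩
    rw [← pairObj_coe_eq_of_forall_inner_eq_add ℓ (fun i => ⟨z₁ i, hz₁ i⟩)
      (fun i => ⟨z₂ i, hz₂ i⟩) y (c := 0)
      (fun w => by rw [← Submodule.coe_sub, hext, add_zero]), hext]

/-- For `λ > 0`, the infimum of the regularized paired-comparison objective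
`f(A, u) + λ‖u‖_A²` over generalized Mahalanobis operators on `H` and points of `H` equals
the infimum of `f_V(B, u) + λ‖u‖_B²` over generalized Mahalanobis operators on `V` and
points of `V`. -/
theorem regularized_infimum_eq_subspace_infimum
    {H : Type*} [NormedAddCommGroup H] [InnerProductSpace ℝ H] [CompleteSpace H]
    (V : Submodule ℝ H) [FiniteDimensional ℝ V]
    {n : ℕ} (ℓ : ℝ → ℝ → ℝ) (z₁ z₂ : Fin n → H) (y : Fin n → ℝ)
    (hz₁ : ∀ i, z₁ i ∈ V) (hz₂ : ∀ i, z₂ i ∈ V)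
    (hy : ∀ i, y i = 1 ∨ y i = -1)
    (lam : ℝ) (hlam : 0 < lam) :
    sInf {r : ℝ | ∃ (A : H →L[ℝ] H) (u : H), IsGenMahalanobis A ∧
        r = pairObj ℓ z₁ z₂ y ⇑A u + lam * ⟪A u, u⟫} =
      sInf {r : ℝ | ∃ (B : V →ₗ[ℝ] V) (u : V), IsGenMahalanobisLin B ∧
        r = pairObj ℓ (fun i => (⟨z₁ i, hz₁ i⟩ : V)) (fun i => (⟨z₂ i, hz₂ i⟩ : V)) y ⇑B u +
          lam * ⟪B u, u⟫} :=
  regularized_infimum_eq_subspace_infimum_general V ℓ z₁ z₂ y hz₁ hz₂ lam hlam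
end
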